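/- arXiv:1403.0537 — 4 statements merged into one kernel-verified Lean document; each statement's English description precedes it below -/
import Mathlib

section
/- For 0 ≤ k ≤ 1 and x ≥ 0, the Rice Ie-function satisfies Ie(k,x) = (1/√(1-k²))·[1 - (1/π)·∫₀^π exp(-x(1-k²)/(1-k·cosθ)) dθ]. -/
open Real intervalIntegral

/-- Modified Bessel function of the first kind, order zero. -/
noncomputable def besselI0 (z : ℝ) : ℝ := ∑' n : ℕ, (z / 2) ^ (2 * n) / (n.factorial : ℝ) ^ 2

/-- Rice Ie-function. -/
noncomputable def riceIe (k x : ℝ) : ℝ := ∫ t in (0:ℝ)..x, Real.exp (-t) * besselI0 (k * t)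

/-!
Integrating the exponential series term by term against Wallis' integrals gives
`π I₀(z) = ∫₀^π exp (z cos θ) dθ`. Inserting this into `Ie(k, x)` and exchanging the two
integrals leaves an elementary `t`-integral:
`π Ie(k, x) = ∫₀^π (1 - exp (-x (1 - k cos θ))) / (1 - k cos θ) dθ`.
The substitution `cos ψ = (k - cos θ) / (1 - k cos θ)` reverses `[0, π]`, with
`(1 - k cos ψ)(1 - k cos θ) = 1 - k²` and `dψ = -√(1 - k²) dθ / (1 - k cos θ)`. It turns the
second part of the integrand into the exponential of the claim, and at `x = 0` it evaluates the
first part: `∫₀^π dθ / (1 - k cos θ) = π / √(1 - k²)`.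
-/

open MeasureTheory Set
open scoped Nat

lemma integral_cos_pow_add_two_zero_pi (n : ℕ) :
    ∫ θ in (0:ℝ)..π, cos θ ^ (n + 2) = (n + 1) / (n + 2) * ∫ θ in (0:ℝ)..π, cos θ ^ n := by
  simp [integral_cos_pow]

lemma integral_cos_pow_odd_zero_pi (m : ℕ) : ∫ θ in (0:ℝ)..π, cos θ ^ (2 * m + 1) = 0 := by
  induction m with
  | zero => simp
  | succ m ih => rw [show 2 * (m + 1) + 1 = 2 * m + 1 + 2 by ring,
      integral_cos_pow_add_two_zero_pi, ih, mul_zero]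

lemma integral_cos_pow_even_zero_pi (m : ℕ) :
    ∫ θ in (0:ℝ)..π, cos θ ^ (2 * m) = π * (2 * m)! / (4 ^ m * (m ! : ℝ) ^ 2) := by
  induction m with
  | zero => simp
  | succ m ih =>
    rw [show 2 * (m + 1) = 2 * m + 2 by ring, integral_cos_pow_add_two_zero_pi, ih,
      Nat.factorial_succ (2 * m + 1), Nat.factorial_succ (2 * m), Nat.factorial_succ m]
    push_cast
    field_simp
    ring

lemma hasSum_integral_exp_mul_cos (z : ℝ) :
    HasSum (fun n : ℕ => z ^ n / n ! * ∫ θ in (0:ℝ)..π, cos θ ^ n)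
      (∫ θ in (0:ℝ)..π, exp (z * cos θ)) := by
  have hterm (n : ℕ) : z ^ n / n ! * ∫ θ in (0:ℝ)..π, cos θ ^ n
      = ∫ θ in (0:ℝ)..π, (z * cos θ) ^ n / n ! := by
    rw [← intervalIntegral.integral_const_mul]; congr 1; ext θ; ring
  simp only [hterm]
  refine hasSum_integral_of_dominated_convergence (fun n _ => |z| ^ n / n !)
    (fun n => by fun_prop) (fun n => ae_of_all _ fun θ _ => ?_)
    (ae_of_all _ fun _ _ => summable_pow_div_factorial |z|) intervalIntegrable_const
    (ae_of_all _ fun θ _ => ?_)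
  · rw [norm_div, norm_pow, Real.norm_eq_abs, RCLike.norm_natCast, abs_mul]
    gcongr
    exact mul_le_of_le_one_right (abs_nonneg z) (abs_cos_le_one θ)
  · simpa [Real.exp_eq_exp_ℝ, div_eq_inv_mul] using
      NormedSpace.exp_series_hasSum_exp' (𝕂 := ℝ) (z * cos θ)

theorem integral_exp_mul_cos (z : ℝ) :
    ∫ θ in (0:ℝ)..π, exp (z * cos θ) = π * besselI0 z := by
  have hodd : ∀ n ∉ range (2 * ·), z ^ n / n ! * ∫ θ in (0:ℝ)..π, cos θ ^ n = 0 := by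
    rintro n hn
    obtain ⟨m, rfl⟩ : Odd n :=
      Nat.not_even_iff_odd.mp fun ⟨m, hm⟩ => hn ⟨m, by beta_reduce; omega⟩
    rw [integral_cos_pow_odd_zero_pi, mul_zero]
  have heven := ((mul_right_injective₀ (two_ne_zero' ℕ)).hasSum_iff hodd).mpr
    (hasSum_integral_exp_mul_cos z)
  rw [besselI0, ← tsum_mul_left, ← heven.tsum_eq]
  congr 1
  ext m
  rw [Function.comp_apply, integral_cos_pow_even_zero_pi, div_pow,
    show (4 : ℝ) ^ m = 2 ^ (2 * m) by rw [pow_mul]; norm_num]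
  field_simp

theorem intervalIntegral_integral_swap_of_continuous {E : Type*} [NormedAddCommGroup E]
    [NormedSpace ℝ E] [CompleteSpace E] {f : ℝ → ℝ → E} (hf : Continuous (Function.uncurry f))
    (a b c d : ℝ) :
    ∫ x in a..b, ∫ y in c..d, f x y = ∫ y in c..d, ∫ x in a..b, f x y := by
  simp only [intervalIntegral_eq_integral_uIoc, MeasureTheory.integral_smul]
  rw [smul_comm]
  congr 2
  refine integral_integral_swap ?_
  rw [Measure.prod_restrict, ← Measure.volume_eq_prod]
  exact (hf.continuousOn.integrableOn_compact (isCompact_uIcc.prod isCompact_uIcc)).mono_set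
    (prod_mono uIoc_subset_uIcc uIoc_subset_uIcc)

lemma integral_exp_neg_mul {c : ℝ} (hc : c ≠ 0) (x : ℝ) :
    ∫ t in (0:ℝ)..x, exp (-(c * t)) = (1 - exp (-(c * x))) / c := by
  have hderiv (t : ℝ) : HasDerivAt (fun t => -exp (-(c * t)) / c) (exp (-(c * t))) t := by
    have hlin : HasDerivAt (fun t => -(c * t)) (-c) t := by
      simpa using ((hasDerivAt_id' t).const_mul c).fun_neg
    exact (hlin.exp.fun_neg.div_const c).congr_deriv (by field_simp)
  rw [integral_eq_sub_of_hasDerivAt (fun t _ => hderiv t)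
    ((by fun_prop : Continuous _).intervalIntegrable _ _)]
  simp only [mul_zero, neg_zero, exp_zero]
  ring

lemma one_sub_mul_cos_pos {k : ℝ} (hk : |k| < 1) (θ : ℝ) : 0 < 1 - k * cos θ := by
  have : |k * cos θ| < 1 := by
    rw [abs_mul]; exact (mul_le_of_le_one_right (abs_nonneg k) (abs_cos_le_one θ)).trans_lt hk
  linarith [le_abs_self (k * cos θ)]

lemma riceIe_eq_integral {k : ℝ} (hk : |k| < 1) (x : ℝ) :
    riceIe k x = π⁻¹ * ∫ θ in (0:ℝ)..π,
      (1 - exp (-((1 - k * cos θ) * x))) / (1 - k * cos θ) := by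
  have hbessel (t : ℝ) : exp (-t) * besselI0 (k * t)
      = π⁻¹ * ∫ θ in (0:ℝ)..π, exp (-((1 - k * cos θ) * t)) := by
    have hsplit (θ : ℝ) : exp (-((1 - k * cos θ) * t)) = exp (-t) * exp (k * t * cos θ) := by
      rw [← exp_add]; ring_nf
    simp only [hsplit, intervalIntegral.integral_const_mul, integral_exp_mul_cos]
    field_simp
  simp only [riceIe, hbessel, intervalIntegral.integral_const_mul]
  rw [intervalIntegral_integral_swap_of_continuous (by fun_prop)]
  simp only [integral_exp_neg_mul (one_sub_mul_cos_pos hk _).ne']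

section ArccosSubstitution

variable {k : ℝ}

lemma abs_sub_cos_div_le_one (hk : |k| < 1) (θ : ℝ) :
    |(k - cos θ) / (1 - k * cos θ)| ≤ 1 := by
  have hpos := one_sub_mul_cos_pos hk θ
  rw [abs_div, abs_of_pos hpos, div_le_one hpos, abs_le]
  have hk' := abs_lt.1 hk
  constructor <;> nlinarith [neg_one_le_cos θ, cos_le_one θ]

lemma one_sub_mul_cos_arccos (hk : |k| < 1) (θ : ℝ) :
    1 - k * cos (arccos ((k - cos θ) / (1 - k * cos θ))) = (1 - k ^ 2) / (1 - k * cos θ) := by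
  have hpos := one_sub_mul_cos_pos hk θ
  have hle := abs_le.1 (abs_sub_cos_div_le_one hk θ)
  rw [cos_arccos hle.1 hle.2]
  field_simp
  ring

lemma sqrt_one_sub_sq_sub_cos_div (hk : |k| < 1) {θ : ℝ} (hθ : 0 ≤ sin θ) :
    √(1 - ((k - cos θ) / (1 - k * cos θ)) ^ 2) = √(1 - k ^ 2) * sin θ / (1 - k * cos θ) := by
  have hpos := one_sub_mul_cos_pos hk θ
  have hs : 0 ≤ 1 - k ^ 2 := by nlinarith [abs_lt.1 hk]
  have hsq : 1 - ((k - cos θ) / (1 - k * cos θ)) ^ 2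
      = (√(1 - k ^ 2) * sin θ / (1 - k * cos θ)) ^ 2 := by
    rw [div_pow, div_pow, mul_pow, sq_sqrt hs]
    field_simp
    linear_combination (k ^ 2 - 1) * sin_sq_add_cos_sq θ
  rw [hsq, sqrt_sq (by positivity)]

lemma hasDerivAt_arccos_sub_cos_div (hk : |k| < 1) {θ : ℝ} (hθ : θ ∈ Ioo 0 π) :
    HasDerivAt (fun θ => arccos ((k - cos θ) / (1 - k * cos θ)))
      (-(√(1 - k ^ 2) / (1 - k * cos θ))) θ := by
  have hpos := one_sub_mul_cos_pos hk θ
  have hsin := sin_pos_of_pos_of_lt_pi hθ.1 hθ.2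
  have hs : 0 < 1 - k ^ 2 := by nlinarith [abs_lt.1 hk]
  have hu : HasDerivAt (fun θ => (k - cos θ) / (1 - k * cos θ))
      ((1 - k ^ 2) * sin θ / (1 - k * cos θ) ^ 2) θ :=
    (((hasDerivAt_cos θ).const_sub k).div ((hasDerivAt_cos θ).const_mul k |>.const_sub 1)
      hpos.ne').congr_deriv (by ring)
  have hroot := sqrt_one_sub_sq_sub_cos_div hk hsin.le
  have hlt : |(k - cos θ) / (1 - k * cos θ)| < 1 := by
    rw [← sq_lt_one_iff_abs_lt_one, ← sub_pos, ← sqrt_pos, hroot]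
    positivity
  refine ((hasDerivAt_arccos (abs_lt.1 hlt).1.ne' (abs_lt.1 hlt).2.ne).comp θ hu).congr_deriv ?_
  rw [hroot]
  field_simp
  rw [sq_sqrt hs.le]

theorem integral_comp_arccos_sub_cos_div (hk : |k| < 1) {g : ℝ → ℝ}
    (hg : ContinuousOn g (Icc 0 π)) :
    ∫ ψ in (0:ℝ)..π, g ψ
      = √(1 - k ^ 2) *
          ∫ θ in (0:ℝ)..π, g (arccos ((k - cos θ) / (1 - k * cos θ))) / (1 - k * cos θ) := by
  have hne (θ : ℝ) : 1 - k * cos θ ≠ 0 := (one_sub_mul_cos_pos hk θ).ne'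
  have hsubst := integral_deriv_smul_comp'' (a := 0) (b := π)
    (f := fun θ => arccos ((k - cos θ) / (1 - k * cos θ)))
    (f' := fun θ => -(√(1 - k ^ 2) / (1 - k * cos θ))) (g := g)
    (continuous_arccos.comp ((by fun_prop : Continuous _).div (by fun_prop) hne)).continuousOn
    (fun θ hθ => by
      rw [min_eq_left pi_pos.le, max_eq_right pi_pos.le] at hθ
      exact (hasDerivAt_arccos_sub_cos_div hk hθ).hasDerivWithinAt)
    (((by fun_prop : Continuous _).div (by fun_prop) hne).neg.continuousOn)
    (hg.mono (image_subset_iff.2 fun θ _ => ⟨arccos_nonneg _, arccos_le_pi _⟩))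
  have hf0 : (k - cos 0) / (1 - k * cos 0) = -1 := by
    rw [div_eq_iff (hne 0), cos_zero]; ring
  have hfπ : (k - cos π) / (1 - k * cos π) = 1 := by
    rw [div_eq_iff (hne π), cos_pi]; ring
  simp only [hf0, hfπ, arccos_neg_one, arccos_one, Function.comp_apply, smul_eq_mul] at hsubst
  rw [integral_symm π 0, ← hsubst, ← intervalIntegral.integral_neg,
    ← intervalIntegral.integral_const_mul]
  congr 1; ext θ; ring

end ArccosSubstitution

lemma integral_one_div_one_sub_mul_cos {k : ℝ} (hk : |k| < 1) :
    ∫ θ in (0:ℝ)..π, 1 / (1 - k * cos θ) = π / √(1 - k ^ 2) := by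
  have hs : 0 < √(1 - k ^ 2) := sqrt_pos.2 (by nlinarith [abs_lt.1 hk])
  have h := integral_comp_arccos_sub_cos_div hk (g := fun _ => 1) continuousOn_const
  simp only [intervalIntegral.integral_const, sub_zero, smul_eq_mul, mul_one] at h
  rw [eq_div_iff hs.ne', mul_comm]
  exact h.symm

lemma integral_exp_div_one_sub_mul_cos {k : ℝ} (hk : |k| < 1) (x : ℝ) :
    ∫ ψ in (0:ℝ)..π, exp (-x * (1 - k ^ 2) / (1 - k * cos ψ))
      = √(1 - k ^ 2) * ∫ θ in (0:ℝ)..π, exp (-((1 - k * cos θ) * x)) / (1 - k * cos θ) := by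
  have hpos := one_sub_mul_cos_pos hk
  have hs : 0 < 1 - k ^ 2 := by nlinarith [abs_lt.1 hk]
  have hcont : Continuous fun ψ => exp (-x * (1 - k ^ 2) / (1 - k * cos ψ)) := by
    fun_prop (disch := exact fun ψ => (hpos ψ).ne')
  rw [integral_comp_arccos_sub_cos_div hk hcont.continuousOn]
  congr 1
  refine integral_congr fun θ _ => ?_
  simp only [one_sub_mul_cos_arccos hk θ]
  congr 2
  field_simp

theorem rice_Ie_eq_general (k x : ℝ) (hk0 : 0 ≤ k) (hk1 : k < 1) :
    riceIe k x =
      (1 / Real.sqrt (1 - k ^ 2)) *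
        (1 - (1 / π) * ∫ θ in (0:ℝ)..π,
          Real.exp (-x * (1 - k ^ 2) / (1 - k * Real.cos θ))) := by
  have hk : |k| < 1 := abs_lt.2 ⟨by linarith, hk1⟩
  have hs : 0 < √(1 - k ^ 2) := sqrt_pos.2 (by nlinarith)
  have hne (θ : ℝ) : 1 - k * cos θ ≠ 0 := (one_sub_mul_cos_pos hk θ).ne'
  rw [riceIe_eq_integral hk, integral_exp_div_one_sub_mul_cos hk]
  simp only [sub_div]
  have hcont₁ : Continuous fun θ => 1 / (1 - k * cos θ) := by fun_prop (disch := exact hne)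
  have hcont₂ : Continuous fun θ => exp (-((1 - k * cos θ) * x)) / (1 - k * cos θ) := by
    fun_prop (disch := exact hne)
  rw [integral_sub (hcont₁.intervalIntegrable _ _) (hcont₂.intervalIntegrable _ _),
    integral_one_div_one_sub_mul_cos hk]
  generalize ∫ θ in (0:ℝ)..π, exp (-((1 - k * cos θ) * x)) / (1 - k * cos θ) = I
  field_simp

theorem rice_Ie_eq (k x : ℝ) (hk0 : 0 ≤ k) (hk1 : k < 1) (hx : 0 ≤ x) :
    riceIe k x =
      (1 / Real.sqrt (1 - k ^ 2)) *
        (1 - (1 / π) * ∫ θ in (0:ℝ)..π,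
          Real.exp (-x * (1 - k ^ 2) / (1 - k * Real.cos θ))) :=
  rice_Ie_eq_general k x hk0 hk1
end

section
/- For U > V ≥ 0 and W = √(U² - V²), the identity W·∫₀^π e^{-(U - V·cosθ)}/(U - V·cosθ) dθ = ∫₀^π exp(-W²/(U - V·cosθ)) dθ holds. -/
open Real intervalIntegral

/-!
The substitution `cos φ = (V - U cos θ) / (U - V cos θ)` maps `[0, π]` onto itself, reversing
orientation, with `(U - V cos φ) (U - V cos θ) = W²` and `dφ = -W dθ / (U - V cos θ)`.
Substituting it into the right-hand side turns `exp (-W² / (U - V cos φ))` into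
`exp (-(U - V cos θ))` and produces the factor `W / (U - V cos θ)`.
-/

namespace Pawula

noncomputable def conjugateCos (U V θ : ℝ) : ℝ := (V - U * cos θ) / (U - V * cos θ)

noncomputable def conjugateAngle (U V θ : ℝ) : ℝ := arccos (conjugateCos U V θ)

variable {U V : ℝ}

lemma sub_mul_cos_pos (h : |V| < U) (θ : ℝ) : 0 < U - V * cos θ := by
  have : V * cos θ ≤ |V| := by
    calc V * cos θ ≤ |V * cos θ| := le_abs_self _
      _ = |V| * |cos θ| := abs_mul _ _
      _ ≤ |V| := mul_le_of_le_one_right (abs_nonneg _) (abs_cos_le_one θ)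
  linarith

lemma sq_sub_sq_pos (h : |V| < U) : 0 < U ^ 2 - V ^ 2 :=
  sub_pos.mpr (sq_lt_sq.mpr (h.trans_le (le_abs_self U)))

lemma one_sub_conjugateCos_sq (h : |V| < U) (θ : ℝ) :
    1 - conjugateCos U V θ ^ 2 = (U ^ 2 - V ^ 2) * sin θ ^ 2 / (U - V * cos θ) ^ 2 := by
  have := (sub_mul_cos_pos h θ).ne'
  rw [conjugateCos, sin_sq]
  field_simp
  ring

lemma conjugateCos_mem_Icc (h : |V| < U) (θ : ℝ) : conjugateCos U V θ ∈ Set.Icc (-1) 1 := by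
  have : 0 ≤ 1 - conjugateCos U V θ ^ 2 := by
    rw [one_sub_conjugateCos_sq h]
    have := sq_sub_sq_pos h
    positivity
  rw [Set.mem_Icc, ← abs_le]
  exact abs_le_one_iff_mul_self_le_one.mpr (by nlinarith)

lemma sub_mul_cos_conjugateAngle (h : |V| < U) (θ : ℝ) :
    U - V * cos (conjugateAngle U V θ) = (U ^ 2 - V ^ 2) / (U - V * cos θ) := by
  have := (sub_mul_cos_pos h θ).ne'
  obtain ⟨h₁, h₂⟩ := conjugateCos_mem_Icc h θ
  rw [conjugateAngle, cos_arccos h₁ h₂, conjugateCos]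
  field_simp
  ring

lemma conjugateAngle_zero (h : |V| < U) : conjugateAngle U V 0 = π := by
  have : U - V ≠ 0 := by linarith [le_abs_self V]
  rw [conjugateAngle, conjugateCos, cos_zero, mul_one, mul_one, ← neg_sub, neg_div,
    div_self this, arccos_neg_one]

lemma conjugateAngle_pi (h : |V| < U) : conjugateAngle U V π = 0 := by
  have : V + U ≠ 0 := by linarith [neg_abs_le V]
  rw [conjugateAngle, conjugateCos, cos_pi, mul_neg_one, mul_neg_one, sub_neg_eq_add,
    sub_neg_eq_add, add_comm U, div_self this, arccos_one]

lemma continuous_div_sub_mul_cos (h : |V| < U) {f : ℝ → ℝ} (hf : Continuous f) :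
    Continuous fun θ ↦ f θ / (U - V * cos θ) :=
  hf.div (by fun_prop) fun θ ↦ (sub_mul_cos_pos h θ).ne'

lemma continuous_conjugateAngle (h : |V| < U) : Continuous (conjugateAngle U V) :=
  continuous_arccos.comp <| continuous_div_sub_mul_cos h (by fun_prop)

lemma conjugateAngle_mem_Icc (θ : ℝ) : conjugateAngle U V θ ∈ Set.Icc 0 π :=
  ⟨arccos_nonneg _, arccos_le_pi _⟩

lemma hasDerivAt_conjugateCos (h : |V| < U) (θ : ℝ) :
    HasDerivAt (conjugateCos U V) ((U ^ 2 - V ^ 2) * sin θ / (U - V * cos θ) ^ 2) θ := by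
  have hden := (sub_mul_cos_pos h θ).ne'
  have := (((hasDerivAt_cos θ).const_mul U).const_sub V).div
    (((hasDerivAt_cos θ).const_mul V).const_sub U) hden
  refine this.congr_deriv ?_
  field_simp
  ring

lemma hasDerivAt_conjugateAngle (h : |V| < U) {θ : ℝ} (hθ : θ ∈ Set.Ioo 0 π) :
    HasDerivAt (conjugateAngle U V) (-(√(U ^ 2 - V ^ 2) / (U - V * cos θ))) θ := by
  have hden := sub_mul_cos_pos h θ
  have hsin := sin_pos_of_pos_of_lt_pi hθ.1 hθ.2
  have hW := sq_sub_sq_pos h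
  have hsqrt : √(1 - conjugateCos U V θ ^ 2) = √(U ^ 2 - V ^ 2) * sin θ / (U - V * cos θ) := by
    rw [one_sub_conjugateCos_sq h, sqrt_div' _ (sq_nonneg _), sqrt_mul hW.le,
      sqrt_sq hsin.le, sqrt_sq hden.le]
  have hpos : 0 < 1 - conjugateCos U V θ ^ 2 := by
    rw [one_sub_conjugateCos_sq h]; positivity
  have hne₁ : conjugateCos U V θ ≠ -1 := by rintro hc; rw [hc] at hpos; norm_num at hpos
  have hne₂ : conjugateCos U V θ ≠ 1 := by rintro hc; rw [hc] at hpos; norm_num at hpos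
  refine ((hasDerivAt_arccos hne₁ hne₂).comp θ (hasDerivAt_conjugateCos h θ)).congr_deriv ?_
  rw [hsqrt]
  have := (sqrt_pos.mpr hW).ne'
  field_simp
  rw [sq_sqrt hW.le]

theorem integral_eq_integral_comp_conjugateAngle (h : |V| < U) {G : ℝ → ℝ}
    (hG : ContinuousOn G (Set.Icc 0 π)) :
    ∫ φ in 0..π, G φ =
      √(U ^ 2 - V ^ 2) * ∫ θ in 0..π, G (conjugateAngle U V θ) / (U - V * cos θ) := by
  have hsub := integral_comp_mul_deriv'' (a := 0) (b := π)
    (continuous_conjugateAngle h).continuousOn (fun θ hθ ↦ ?_)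
    (f' := fun θ ↦ -(√(U ^ 2 - V ^ 2) / (U - V * cos θ))) ?_
    (hG.mono <| Set.image_subset_iff.mpr fun θ _ ↦ conjugateAngle_mem_Icc θ)
  · calc ∫ φ in 0..π, G φ = -∫ φ in π..0, G φ := integral_symm π 0
        _ = -∫ θ in 0..π, G (conjugateAngle U V θ) * -(√(U ^ 2 - V ^ 2) / (U - V * cos θ)) := by
          rw [conjugateAngle_zero h, conjugateAngle_pi h] at hsub
          rw [← hsub]; rfl
        _ = _ := by
          rw [← integral_neg, ← integral_const_mul]
          refine integral_congr fun θ _ ↦ ?_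
          ring
  · rw [min_eq_left pi_pos.le, max_eq_right pi_pos.le] at hθ
    exact (hasDerivAt_conjugateAngle h hθ).hasDerivWithinAt
  · exact (continuous_div_sub_mul_cos h continuous_const).neg.continuousOn

end Pawula

theorem pawula_identity (U V : ℝ) (hV : 0 ≤ V) (hUV : V < U) :
    Real.sqrt (U ^ 2 - V ^ 2) *
        ∫ θ in (0:ℝ)..π, Real.exp (-(U - V * Real.cos θ)) / (U - V * Real.cos θ) =
      ∫ θ in (0:ℝ)..π,
        Real.exp (-(Real.sqrt (U ^ 2 - V ^ 2)) ^ 2 / (U - V * Real.cos θ)) := by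
  have h : |V| < U := by rwa [abs_of_nonneg hV]
  have hW := Pawula.sq_sub_sq_pos h
  have hG : Continuous fun φ ↦ exp (-√(U ^ 2 - V ^ 2) ^ 2 / (U - V * cos φ)) :=
    continuous_exp.comp (Pawula.continuous_div_sub_mul_cos h continuous_const)
  rw [Pawula.integral_eq_integral_comp_conjugateAngle h hG.continuousOn]
  refine congrArg _ (integral_congr fun θ _ ↦ ?_)
  have := (Pawula.sub_mul_cos_pos h θ).ne'
  rw [sq_sqrt hW.le, Pawula.sub_mul_cos_conjugateAngle h, neg_div, div_div_cancel₀ hW.ne']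
end

section
/- Let γ̄_b, γ̄_e > 0, R_S ≥ 0, and let the eavesdropper SNR be squared-Hoyt distributed with mean γ̄_e and parameter q_e ∈ (0,1] (eccentricity ε_e = (1-q_e²)/(1+q_e²)), while the legitimate SNR is exponential with mean γ̄_b, independent. Then P(log₂(1+γ_b) - log₂(1+γ_e) < R_S) = 1 - (γ̄_b/(γ̄_b + 2^{R_S}γ̄_e))·exp(-(2^{R_S}-1)/γ̄_b)·[1 - (ε_e·2^{R_S}·γ̄_e/(γ̄_b + 2^{R_S}·γ̄_e))²]^{-1/2}. -/
/-!
Conditioning on `γe` and using that `γb` is exponential, the outage probability equals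
`1 - exp (-(2 ^ RS - 1) / γ̄b) * E[exp (-s γe)]` with `s = 2 ^ RS / γ̄b`. The tail of `γe` is that
of a mixture of exponential laws with means `γ̄e (1 - ε cos θ)`, `θ` uniform on `[0, π]`, so by the
layer-cake formula and Tonelli its Laplace transform is `π⁻¹ ∫₀^π dθ / (1 + s γ̄e (1 - ε cos θ))`.
With `r = √(a² - b²)` and `k = b / (a + r)`, `1 / (a - b cos θ)` is `r⁻¹` times the Poisson kernel
`(1 - k²) / (1 - 2 k cos θ + k²)`, whose integral over `[0, π]` is `π`.
-/

open Real MeasureTheory ProbabilityTheory Set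

lemma mul_cos_lt {a b : ℝ} (hab : |b| < a) (θ : ℝ) : b * cos θ < a := by
  refine (le_abs_self _).trans_lt ?_
  rw [abs_mul]
  exact (mul_le_of_le_one_right (abs_nonneg b) (abs_cos_le_one θ)).trans_lt hab

lemma one_sub_two_mul_cos_add_sq_pos {k : ℝ} (hk : |k| < 1) (θ : ℝ) :
    0 < 1 - 2 * k * cos θ + k ^ 2 := by
  nlinarith [mul_cos_lt hk θ, sin_sq_add_cos_sq θ, sq_nonneg (k * sin θ)]

lemma hasDerivAt_add_two_mul_arctan {k : ℝ} (hk : |k| < 1) (θ : ℝ) :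
    HasDerivAt (fun θ => θ + 2 * arctan (k * sin θ / (1 - k * cos θ)))
      ((1 - k ^ 2) / (1 - 2 * k * cos θ + k ^ 2)) θ := by
  have hden : 0 < 1 - k * cos θ := sub_pos.2 (mul_cos_lt hk θ)
  have hquot : HasDerivAt (fun θ => k * sin θ / (1 - k * cos θ))
      ((k * cos θ * (1 - k * cos θ) - k * sin θ * (k * sin θ)) / (1 - k * cos θ) ^ 2) θ :=
    ((hasDerivAt_sin θ).const_mul k).div
      (by simpa using ((hasDerivAt_cos θ).const_mul k).const_sub 1) hden.ne'
  refine ((hasDerivAt_id' θ).add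
    (((hasDerivAt_arctan _).comp θ hquot).const_mul 2)).congr_deriv ?_
  have hpos := one_sub_two_mul_cos_add_sq_pos hk θ
  field_simp
  linear_combination (-k ^ 2 * (2 - 2 * k * cos θ)) * sin_sq_add_cos_sq θ

lemma integral_poissonKernel {k : ℝ} (hk : |k| < 1) :
    ∫ θ in (0 : ℝ)..π, (1 - k ^ 2) / (1 - 2 * k * cos θ + k ^ 2) = π := by
  rw [intervalIntegral.integral_eq_sub_of_hasDerivAt
    (fun θ _ => hasDerivAt_add_two_mul_arctan hk θ)]
  · simp
  · exact (continuous_const.div (by fun_prop)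
      fun θ => (one_sub_two_mul_cos_add_sq_pos hk θ).ne').intervalIntegrable _ _

lemma integral_one_div_sub_mul_cos {a b : ℝ} (hab : |b| < a) :
    ∫ θ in (0 : ℝ)..π, 1 / (a - b * cos θ) = π / √(a ^ 2 - b ^ 2) := by
  obtain ⟨hb₁, hb₂⟩ := abs_lt.1 hab
  set r := √(a ^ 2 - b ^ 2)
  have hr2 : r ^ 2 = a ^ 2 - b ^ 2 := sq_sqrt (by nlinarith)
  have hr : 0 < r := sqrt_pos.2 (by nlinarith)
  have hk : |b / (a + r)| < 1 := by
    rw [abs_div, abs_of_pos (show 0 < a + r by linarith), div_lt_one (by linarith)]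
    linarith
  have hkernel (θ : ℝ) : 1 / (a - b * cos θ) =
      r⁻¹ * ((1 - (b / (a + r)) ^ 2) / (1 - 2 * (b / (a + r)) * cos θ + (b / (a + r)) ^ 2)) := by
    have h₁ : 0 < a - b * cos θ := sub_pos.2 (mul_cos_lt hab θ)
    have h₂ : a + r ≠ 0 := by linarith
    have hden : (a + r) * (a + r - b * cos θ * 2) + b ^ 2 = 2 * (a + r) * (a - b * cos θ) := by
      linear_combination hr2
    field_simp
    rw [hden, eq_div_iff (by positivity)]
    linear_combination (a - b * cos θ) * hr2
  simp_rw [hkernel, intervalIntegral.integral_const_mul, integral_poissonKernel hk]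
  field_simp

lemma integral_mul_exp_neg_mul (s y : ℝ) :
    ∫ t in (0 : ℝ)..y, s * exp (-(s * t)) = 1 - exp (-(s * y)) := by
  have hderiv (t : ℝ) : HasDerivAt (fun t => -exp (-(s * t))) (s * exp (-(s * t))) t := by
    simpa [mul_comm] using (((hasDerivAt_id' t).const_mul s).fun_neg.exp).fun_neg
  rw [intervalIntegral.integral_eq_sub_of_hasDerivAt (fun t _ => hderiv t)
    (Continuous.intervalIntegrable (by fun_prop) _ _)]
  simp
  ring

lemma lintegral_one_sub_exp_neg_mul {μ : Measure ℝ} (hμ : ∀ᵐ y ∂μ, 0 ≤ y) {s : ℝ} (hs : 0 ≤ s) :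
    ∫⁻ y, ENNReal.ofReal (1 - exp (-(s * y))) ∂μ =
      ∫⁻ t in Ioi 0, μ (Ioi t) * ENNReal.ofReal (s * exp (-(s * t))) := by
  have := lintegral_comp_eq_lintegral_meas_lt_mul μ (f := id)
    (g := fun t => s * exp (-(s * t))) hμ aemeasurable_id
    (fun _ _ => Continuous.intervalIntegrable (by fun_prop) _ _)
    (.of_forall fun t => by positivity)
  simp only [id, integral_mul_exp_neg_mul] at this
  exact this

lemma lintegral_exp_neg_div_mul_exp_neg_mul {m s : ℝ} (hm : 0 < m) (hs : 0 ≤ s) :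
    ∫⁻ t in Ioi 0, ENNReal.ofReal (exp (-t / m)) * ENNReal.ofReal (s * exp (-(s * t))) =
      ENNReal.ofReal (s * m / (1 + s * m)) := by
  have hrate : 0 < s + m⁻¹ := by positivity
  have hexp (t : ℝ) : ENNReal.ofReal (exp (-t / m)) * ENNReal.ofReal (s * exp (-(s * t))) =
      ENNReal.ofReal (s * exp (-(s + m⁻¹) * t)) := by
    rw [← ENNReal.ofReal_mul (exp_pos _).le, mul_left_comm, ← exp_add]
    congr 3
    ring
  simp_rw [hexp]
  rw [← ofReal_integral_eq_lintegral_ofReal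
      ((integrableOn_exp_mul_Ioi (by linarith) 0).const_mul s) (.of_forall fun t => by positivity),
    integral_const_mul, integral_exp_mul_Ioi (by linarith), mul_zero, exp_zero]
  congr 1
  field_simp
  ring

lemma integral_one_sub {α : Type*} [MeasurableSpace α] {μ : Measure α} [IsProbabilityMeasure μ]
    {f : α → ℝ} (hf : Integrable f μ) : ∫ x, (1 - f x) ∂μ = 1 - ∫ x, f x ∂μ := by
  rw [integral_sub (integrable_const 1) hf]
  simp

lemma exp_neg_mul_le_one_ae {μ : Measure ℝ} (hμ : ∀ᵐ y ∂μ, 0 ≤ y) {s : ℝ} (hs : 0 ≤ s) :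
    ∀ᵐ y ∂μ, exp (-(s * y)) ≤ 1 := by
  filter_upwards [hμ] with y hy
  rw [exp_le_one_iff, neg_nonpos]
  positivity

lemma integrable_exp_neg_mul {μ : Measure ℝ} [IsFiniteMeasure μ] (hμ : ∀ᵐ y ∂μ, 0 ≤ y) {s : ℝ}
    (hs : 0 ≤ s) : Integrable (fun y => exp (-(s * y))) μ :=
  .of_bound (by fun_prop) 1 (by
    filter_upwards [exp_neg_mul_le_one_ae hμ hs] with y hy
    rwa [norm_of_nonneg (exp_pos _).le])

section ExponentialMixture

variable {Θ : Type*} [MeasurableSpace Θ] {ν : Measure Θ} {g : Θ → ℝ} {μ : Measure ℝ} {s : ℝ}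

lemma lintegral_one_sub_exp_neg_mul_of_tail_eq_lintegral [SFinite ν] (hg : Measurable g)
    (hg0 : ∀ θ, 0 < g θ) (hμ : ∀ᵐ y ∂μ, 0 ≤ y)
    (htail : ∀ t, 0 < t → μ (Ioi t) = ∫⁻ θ, ENNReal.ofReal (exp (-t / g θ)) ∂ν) (hs : 0 ≤ s) :
    ∫⁻ y, ENNReal.ofReal (1 - exp (-(s * y))) ∂μ =
      ∫⁻ θ, ENNReal.ofReal (s * g θ / (1 + s * g θ)) ∂ν := by
  have hmeas : Measurable (Function.uncurry fun t θ =>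
      ENNReal.ofReal (exp (-t / g θ)) * ENNReal.ofReal (s * exp (-(s * t)))) := by
    fun_prop
  calc ∫⁻ y, ENNReal.ofReal (1 - exp (-(s * y))) ∂μ
      = ∫⁻ t in Ioi 0, ∫⁻ θ,
          ENNReal.ofReal (exp (-t / g θ)) * ENNReal.ofReal (s * exp (-(s * t))) ∂ν := by
        rw [lintegral_one_sub_exp_neg_mul hμ hs]
        refine setLIntegral_congr_fun measurableSet_Ioi fun t ht => ?_
        rw [htail t ht, lintegral_mul_const _ (by fun_prop)]
    _ = ∫⁻ θ, (∫⁻ t in Ioi 0,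
          ENNReal.ofReal (exp (-t / g θ)) * ENNReal.ofReal (s * exp (-(s * t)))) ∂ν :=
        lintegral_lintegral_swap hmeas.aemeasurable
    _ = ∫⁻ θ, ENNReal.ofReal (s * g θ / (1 + s * g θ)) ∂ν :=
        lintegral_congr fun θ => lintegral_exp_neg_div_mul_exp_neg_mul (hg0 θ) hs

lemma integral_exp_neg_mul_of_tail_eq_integral [IsProbabilityMeasure ν] [IsProbabilityMeasure μ]
    (hg : Measurable g) (hg0 : ∀ θ, 0 < g θ) (hμ : ∀ᵐ y ∂μ, 0 ≤ y)
    (htail : ∀ t, 0 < t → μ.real (Ioi t) = ∫ θ, exp (-t / g θ) ∂ν) (hs : 0 ≤ s) :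
    ∫ y, exp (-(s * y)) ∂μ = ∫ θ, 1 / (1 + s * g θ) ∂ν := by
  have hsg (θ : Θ) : 0 ≤ s * g θ := mul_nonneg hs (hg0 θ).le
  have hfrac_mem (θ : Θ) : 0 ≤ s * g θ / (1 + s * g θ) ∧ s * g θ / (1 + s * g θ) ≤ 1 :=
    ⟨by have := hsg θ; positivity, (div_le_one (by linarith [hsg θ])).2 (by linarith)⟩
  have hfrac_int : Integrable (fun θ => s * g θ / (1 + s * g θ)) ν :=
    .of_bound (by fun_prop : Measurable fun θ => s * g θ / (1 + s * g θ)).aestronglyMeasurable 1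
      (.of_forall fun θ => by rw [norm_of_nonneg (hfrac_mem θ).1]; exact (hfrac_mem θ).2)
  have htail' (t : ℝ) (ht : 0 < t) : μ (Ioi t) = ∫⁻ θ, ENNReal.ofReal (exp (-t / g θ)) ∂ν := by
    have hint : Integrable (fun θ => exp (-t / g θ)) ν :=
      .of_bound (by fun_prop : Measurable fun θ => exp (-t / g θ)).aestronglyMeasurable 1
        (.of_forall fun θ => by
          rw [norm_of_nonneg (exp_pos _).le, exp_le_one_iff]
          exact div_nonpos_of_nonpos_of_nonneg (by linarith) (hg0 θ).le)
    rw [← ofReal_measureReal, htail t ht,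
      ofReal_integral_eq_lintegral_ofReal hint (.of_forall fun θ => (exp_pos _).le)]
  have hmass : ∫ y, (1 - exp (-(s * y))) ∂μ = ∫ θ, s * g θ / (1 + s * g θ) ∂ν := by
    rw [integral_eq_lintegral_of_nonneg_ae
        (by filter_upwards [exp_neg_mul_le_one_ae hμ hs] with y hy using sub_nonneg.2 hy)
        (by fun_prop),
      integral_eq_lintegral_of_nonneg_ae (.of_forall fun θ => (hfrac_mem θ).1)
        hfrac_int.aestronglyMeasurable,
      lintegral_one_sub_exp_neg_mul_of_tail_eq_lintegral hg hg0 hμ htail' hs]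
  have hsplit (θ : Θ) : 1 / (1 + s * g θ) = 1 - s * g θ / (1 + s * g θ) := by
    have := hsg θ
    field_simp
    ring
  calc ∫ y, exp (-(s * y)) ∂μ = 1 - ∫ y, (1 - exp (-(s * y))) ∂μ := by
        rw [integral_one_sub (integrable_exp_neg_mul hμ hs), sub_sub_cancel]
    _ = 1 - ∫ θ, s * g θ / (1 + s * g θ) ∂ν := by rw [hmass]
    _ = ∫ θ, 1 / (1 + s * g θ) ∂ν := by rw [funext hsplit, integral_one_sub hfrac_int]

end ExponentialMixture

lemma integral_cond_Ioc {a b : ℝ} (hab : a < b) (f : ℝ → ℝ) :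
    ∫ x, f x ∂(volume[|Ioc a b]) = (b - a)⁻¹ * ∫ x in a..b, f x := by
  rw [ProbabilityTheory.cond, integral_smul_measure, Real.volume_Ioc,
    intervalIntegral.integral_of_le hab.le, ENNReal.toReal_inv, ENNReal.toReal_ofReal (by linarith),
    smul_eq_mul]

theorem integral_exp_neg_mul_of_tail_eq_hoyt {μ : Measure ℝ} [IsProbabilityMeasure μ]
    (hμ : ∀ᵐ y ∂μ, 0 ≤ y) {γ ε s : ℝ} (hγ : 0 < γ) (hε : |ε| < 1) (hs : 0 ≤ s)
    (htail : ∀ t, 0 < t →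
      μ.real (Ioi t) = π⁻¹ * ∫ θ in (0 : ℝ)..π, exp (-t / (γ * (1 - ε * cos θ)))) :
    ∫ y, exp (-(s * y)) ∂μ = 1 / √((1 + s * γ) ^ 2 - (s * γ * ε) ^ 2) := by
  have := cond_isProbabilityMeasure_of_finite (μ := volume) (s := Ioc 0 π) (by simp [pi_pos])
    (by simp)
  have hsγε : |s * γ * ε| < 1 + s * γ := by
    rw [abs_mul, abs_of_nonneg (by positivity)]
    nlinarith [mul_nonneg hs hγ.le]
  rw [integral_exp_neg_mul_of_tail_eq_integral (ν := volume[|Ioc 0 π])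
      (g := fun θ => γ * (1 - ε * cos θ)) (by fun_prop)
      (fun θ => mul_pos hγ (sub_pos.2 (mul_cos_lt hε θ))) hμ
      (by simpa only [integral_cond_Ioc pi_pos, sub_zero] using htail) hs,
    integral_cond_Ioc pi_pos, sub_zero]
  simp_rw [show ∀ θ, 1 + s * (γ * (1 - ε * cos θ)) = 1 + s * γ - s * γ * ε * cos θ by
    intro θ; ring]
  rw [integral_one_div_sub_mul_cos hsγε]
  field_simp

lemma expMeasure_real_Iio {r x : ℝ} (hr : 0 < r) (hx : 0 ≤ x) :
    (expMeasure r).real (Iio x) = 1 - exp (-(r * x)) := by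
  have := isProbabilityMeasure_expMeasure hr
  have : NullSingletonClass (expMeasure r) := by unfold expMeasure gammaMeasure; infer_instance
  rw [measureReal_congr Iio_ae_eq_Iic, ← cdf_eq_real, cdf_expMeasure_eq hr, if_pos hx]

lemma map_eq_expMeasure {Ω : Type*} [MeasurableSpace Ω] {P : Measure Ω} [IsProbabilityMeasure P]
    {X : Ω → ℝ} (hX : Measurable X) (hX0 : ∀ ω, 0 ≤ X ω) {m : ℝ} (hm : 0 < m)
    (hcdf : ∀ a, 0 ≤ a → (P {ω | X ω ≤ a}).toReal = 1 - exp (-a / m)) :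
    P.map X = expMeasure m⁻¹ := by
  have := isProbabilityMeasure_expMeasure (inv_pos.2 hm)
  have := Measure.isProbabilityMeasure_map (μ := P) hX.aemeasurable
  refine Measure.eq_of_cdf _ _ (StieltjesFunction.ext fun a => ?_)
  rw [cdf_expMeasure_eq (inv_pos.2 hm), cdf_eq_real, map_measureReal_apply hX measurableSet_Iic]
  split_ifs with ha
  · rw [show -(m⁻¹ * a) = -a / m by ring, ← hcdf a ha]
    rfl
  · have : X ⁻¹' Iic a = ∅ := eq_empty_of_forall_notMem fun ω hω => ha ((hX0 ω).trans hω)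
    simp [this]

lemma measureReal_lt_comp_eq_integral {Ω β : Type*} [MeasurableSpace Ω] [MeasurableSpace β]
    {P : Measure Ω} [IsFiniteMeasure P] {X : Ω → ℝ} {Y : Ω → β}
    (hX : Measurable X) (hY : Measurable Y) (hXY : IndepFun X Y P) {f : β → ℝ}
    (hf : Measurable f) :
    P.real {ω | X ω < f (Y ω)} = ∫ y, (P.map X).real (Iio (f y)) ∂(P.map Y) := by
  have hS : MeasurableSet {p : β × ℝ | p.2 < f p.1} :=
    measurableSet_lt measurable_snd (hf.comp measurable_fst)
  have hmap : P.map (fun ω => (Y ω, X ω)) = (P.map Y).prod (P.map X) :=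
    (indepFun_iff_map_prod_eq_prod_map_map hY.aemeasurable hX.aemeasurable).1 hXY.symm
  rw [measureReal_def,
    show {ω | X ω < f (Y ω)} = (fun ω => (Y ω, X ω)) ⁻¹' {p | p.2 < f p.1} from rfl,
    ← Measure.map_apply (hY.prodMk hX) hS, hmap, Measure.prod_apply hS, ← integral_toReal]
  · rfl
  · exact (measurable_measure_prodMk_left hS).aemeasurable
  · exact .of_forall fun _ => measure_lt_top _ _

theorem measureReal_lt_of_map_eq_expMeasure {Ω : Type*} [MeasurableSpace Ω] {P : Measure Ω}
    [IsProbabilityMeasure P] {X Y : Ω → ℝ} (hX : Measurable X) (hY : Measurable Y)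
    (hXY : IndepFun X Y P) (hY0 : ∀ᵐ y ∂(P.map Y), 0 ≤ y) {m c : ℝ} (hm : 0 < m) (hc : 1 ≤ c)
    (hXexp : P.map X = expMeasure m⁻¹) :
    P.real {ω | X ω < c * (1 + Y ω) - 1} =
      1 - exp (-(c - 1) / m) * ∫ y, exp (-(c / m * y)) ∂(P.map Y) := by
  have := Measure.isProbabilityMeasure_map (μ := P) hY.aemeasurable
  have hcond : ∀ᵐ y ∂(P.map Y), (P.map X).real (Iio (c * (1 + y) - 1)) =
      1 - exp (-(c - 1) / m) * exp (-(c / m * y)) := by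
    filter_upwards [hY0] with y hy
    rw [hXexp, expMeasure_real_Iio (inv_pos.2 hm) (by nlinarith), ← exp_add]
    congr 2
    field_simp
    ring
  rw [measureReal_lt_comp_eq_integral hX hY hXY (f := fun y => c * (1 + y) - 1) (by fun_prop),
    integral_congr_ae hcond,
    integral_one_sub ((integrable_exp_neg_mul hY0 (by positivity)).const_mul _),
    integral_const_mul]

lemma logb_sub_logb_lt_iff {b x y R : ℝ} (hb : 1 < b) (hx : 0 < x) (hy : 0 < y) :
    logb b x - logb b y < R ↔ x < b ^ R * y := by
  rw [← logb_div hx.ne' hy.ne', logb_lt_iff_lt_rpow hb (div_pos hx hy), div_lt_iff₀ hy]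

lemma abs_one_sub_sq_div_one_add_sq_lt_one {q : ℝ} (hq : q ≠ 0) :
    |(1 - q ^ 2) / (1 + q ^ 2)| < 1 := by
  have := pow_pos (abs_pos.2 hq) 2
  rw [sq_abs] at this
  rw [abs_div, abs_of_pos (show (0 : ℝ) < 1 + q ^ 2 by positivity), div_lt_one (by positivity),
    abs_lt]
  constructor <;> linarith

theorem secrecy_outage_hoyt_eve_general
    {Ω : Type*} [MeasurableSpace Ω] (P : Measure Ω) [IsProbabilityMeasure P]
    (γb γe : Ω → ℝ) (hmb : Measurable γb) (hme : Measurable γe)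
    (hindep : IndepFun γb γe P)
    (γbarb γbare RS qe : ℝ) (hγb : 0 < γbarb) (hγe : 0 < γbare)
    (hRS : 0 ≤ RS) (hqe0 : 0 < qe)
    (hbpos : ∀ ω, 0 ≤ γb ω) (hepos : ∀ ω, 0 ≤ γe ω)
    (hbcdf : ∀ a : ℝ, 0 ≤ a → (P {ω | γb ω ≤ a}).toReal = 1 - Real.exp (-a / γbarb))
    (hecdf : ∀ a : ℝ, 0 ≤ a → (P {ω | γe ω ≤ a}).toReal =
      1 - (1 / π) * ∫ θ in (0:ℝ)..π,
        Real.exp (-a / (γbare * (1 - (1 - qe ^ 2) / (1 + qe ^ 2) * Real.cos θ)))) :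
    (P {ω | Real.logb 2 (1 + γb ω) - Real.logb 2 (1 + γe ω) < RS}).toReal =
      1 - (γbarb / (γbarb + 2 ^ RS * γbare)) * Real.exp (-(2 ^ RS - 1) / γbarb) *
        (1 / Real.sqrt (1 -
          ((1 - qe ^ 2) / (1 + qe ^ 2) * 2 ^ RS * γbare / (γbarb + 2 ^ RS * γbare)) ^ 2)) := by
  have := Measure.isProbabilityMeasure_map (μ := P) hme.aemeasurable
  set ε := (1 - qe ^ 2) / (1 + qe ^ 2)
  set c : ℝ := 2 ^ RS
  have hc : 1 ≤ c := one_le_rpow one_le_two hRS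
  have hγe0 : ∀ᵐ y ∂(P.map γe), 0 ≤ y :=
    (ae_map_iff hme.aemeasurable measurableSet_Ici).2 (.of_forall hepos)
  have hevent : {ω | logb 2 (1 + γb ω) - logb 2 (1 + γe ω) < RS} =
      {ω | γb ω < c * (1 + γe ω) - 1} := by
    ext ω
    rw [mem_ofPred_eq, mem_ofPred_eq, logb_sub_logb_lt_iff one_lt_two (by linarith [hbpos ω])
      (by linarith [hepos ω]), lt_sub_iff_add_lt, add_comm]
  have htail (t : ℝ) (ht : 0 < t) : (P.map γe).real (Ioi t) =
      π⁻¹ * ∫ θ in (0 : ℝ)..π, exp (-t / (γbare * (1 - ε * cos θ))) := by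
    rw [← compl_Iic, probReal_compl_eq_one_sub measurableSet_Iic,
      map_measureReal_apply hme measurableSet_Iic, measureReal_def,
      show γe ⁻¹' Iic t = {ω | γe ω ≤ t} from rfl, hecdf t ht.le]
    ring
  have hsqrt : √((1 + c / γbarb * γbare) ^ 2 - (c / γbarb * γbare * ε) ^ 2) =
      (γbarb + c * γbare) / γbarb * √(1 - (ε * c * γbare / (γbarb + c * γbare)) ^ 2) := by
    rw [← sqrt_sq (by positivity : 0 ≤ (γbarb + c * γbare) / γbarb), ← sqrt_mul (sq_nonneg _)]
    congr 1
    field_simp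
  rw [← measureReal_def, hevent, measureReal_lt_of_map_eq_expMeasure hmb hme hindep hγe0 hγb hc
      (map_eq_expMeasure hmb hbpos hγb hbcdf),
    integral_exp_neg_mul_of_tail_eq_hoyt hγe0 hγe
      (abs_one_sub_sq_div_one_add_sq_lt_one hqe0.ne') (by positivity) htail, hsqrt]
  field_simp

theorem secrecy_outage_hoyt_eve
    {Ω : Type*} [MeasurableSpace Ω] (P : Measure Ω) [IsProbabilityMeasure P]
    (γb γe : Ω → ℝ) (hmb : Measurable γb) (hme : Measurable γe)
    (hindep : IndepFun γb γe P)
    (γbarb γbare RS qe : ℝ) (hγb : 0 < γbarb) (hγe : 0 < γbare)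
    (hRS : 0 ≤ RS) (hqe0 : 0 < qe) (hqe1 : qe ≤ 1)
    (hbpos : ∀ ω, 0 ≤ γb ω) (hepos : ∀ ω, 0 ≤ γe ω)
    (hbcdf : ∀ a : ℝ, 0 ≤ a → (P {ω | γb ω ≤ a}).toReal = 1 - Real.exp (-a / γbarb))
    (hecdf : ∀ a : ℝ, 0 ≤ a → (P {ω | γe ω ≤ a}).toReal =
      1 - (1 / π) * ∫ θ in (0:ℝ)..π,
        Real.exp (-a / (γbare * (1 - (1 - qe ^ 2) / (1 + qe ^ 2) * Real.cos θ)))) :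
    (P {ω | Real.logb 2 (1 + γb ω) - Real.logb 2 (1 + γe ω) < RS}).toReal =
      1 - (γbarb / (γbarb + 2 ^ RS * γbare)) * Real.exp (-(2 ^ RS - 1) / γbarb) *
        (1 / Real.sqrt (1 -
          ((1 - qe ^ 2) / (1 + qe ^ 2) * 2 ^ RS * γbare / (γbarb + 2 ^ RS * γbare)) ^ 2)) :=
  secrecy_outage_hoyt_eve_general P γb γe hmb hme hindep γbarb γbare RS qe hγb hγe hRS hqe0 hbpos
    hepos hbcdf hecdf
end

section
/- Let X be squared-Hoyt distributed with mean γ̄ and parameter q ∈ (0,1], and Y ≥ 0 independent with MGF φ_Y. Then P(X < γₒ·Y) = 1 - (1/π)·∫₀^π φ_Y(-γₒ/γ(θ,q)) dθ for γₒ > 0, where γ(θ,q) = γ̄·(1 - ((1-q²)/(1+q²))·cosθ). -/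
open Real MeasureTheory ProbabilityTheory intervalIntegral Filter Topology Set

/-!
Conditioning on `Y`, independence gives `P(X < γₒ Y) = E[F(γₒ Y)]` with `F(a) = P(X < a)`.
Since the given CDF `a ↦ 1 - (1/π) ∫₀^π exp(-a/γ(θ)) dθ` is continuous, `P(X < a)` equals it
too. The integrand `exp(-γₒ Y/γ(θ))` is bounded by `1` because `Y ≥ 0`, so Fubini exchanges the
expectation with the `θ`-integral, and `E[exp(-γₒ Y/γ(θ))]` is the MGF of `Y` at `-γₒ/γ(θ)`.
-/

section LeftLimit

variable {Ω : Type*} [MeasurableSpace Ω] {μ : Measure Ω} [IsFiniteMeasure μ]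

theorem measureReal_setOf_lt_eq_of_continuousWithinAt {X : Ω → ℝ} {F : ℝ → ℝ} {a : ℝ}
    (hF : ContinuousWithinAt F (Iio a) a)
    (hcdf : ∀ᶠ b in 𝓝[<] a, μ.real {ω | X ω ≤ b} = F b) :
    μ.real {ω | X ω < a} = F a := by
  obtain ⟨u, hu_mono, hu_lt, hu_lim⟩ := exists_seq_strictMono_tendsto a
  have hu : Tendsto u atTop (𝓝[<] a) :=
    tendsto_nhdsWithin_of_tendsto_nhds_of_eventually_within _ hu_lim (.of_forall hu_lt)
  have hunion : ⋃ n, {ω | X ω ≤ u n} = {ω | X ω < a} := by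
    ext ω
    simp only [mem_iUnion, mem_ofPred_eq]
    refine ⟨fun ⟨n, hn⟩ => hn.trans_lt (hu_lt n), fun hω => ?_⟩
    exact ((hu_lim.eventually (lt_mem_nhds hω)).exists).imp fun _ h => h.le
  have hmeas : Tendsto (fun n => μ.real {ω | X ω ≤ u n}) atTop (𝓝 (μ.real {ω | X ω < a})) := by
    rw [← hunion]
    refine (ENNReal.tendsto_toReal (measure_ne_top μ _)).comp
      (tendsto_measure_iUnion_atTop fun m n hmn ω (hω : X ω ≤ u m) => ?_)
    exact hω.trans (hu_mono.monotone hmn)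
  refine tendsto_nhds_unique hmeas ((hF.tendsto.comp hu).congr' ?_)
  exact (hu.eventually hcdf).mono fun n hn => hn.symm

end LeftLimit

theorem IndepFun.measureReal_mem_eq_integral {Ω α β : Type*} [MeasurableSpace Ω]
    [MeasurableSpace α] [MeasurableSpace β] {P : Measure Ω} [IsFiniteMeasure P]
    {X : Ω → α} {Y : Ω → β} (hX : Measurable X) (hY : Measurable Y) (hXY : IndepFun X Y P)
    {s : Set (α × β)} (hs : MeasurableSet s) :
    P.real {ω | (X ω, Y ω) ∈ s} = ∫ ω', P.real {ω | (X ω, Y ω') ∈ s} ∂P := by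
  have hsection : Measurable fun y => P.map X ((fun x => (x, y)) ⁻¹' s) :=
    measurable_measure_prodMk_right hs
  have hlintegral : P {ω | (X ω, Y ω) ∈ s} = ∫⁻ ω', P {ω | (X ω, Y ω') ∈ s} ∂P := by
    calc P {ω | (X ω, Y ω) ∈ s} = P.map (fun ω => (X ω, Y ω)) s :=
          (Measure.map_apply (hX.prodMk hY) hs).symm
      _ = ∫⁻ y, P.map X ((fun x => (x, y)) ⁻¹' s) ∂(P.map Y) := by
          rw [(indepFun_iff_map_prod_eq_prod_map_map hX.aemeasurable hY.aemeasurable).1 hXY,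
            Measure.prod_apply_symm hs]
      _ = ∫⁻ ω', P {ω | (X ω, Y ω') ∈ s} ∂P := by
          rw [lintegral_map hsection hY]
          exact lintegral_congr fun ω' => Measure.map_apply hX (measurable_prodMk_right hs)
  rw [measureReal_def, hlintegral, ← integral_toReal]
  · rfl
  · exact (hsection.comp hY).aemeasurable.congr
      (.of_forall fun ω' => Measure.map_apply hX (measurable_prodMk_right hs))
  · exact .of_forall fun _ => measure_lt_top P _

section Fubini

variable {Ω : Type*} [MeasurableSpace Ω] {P : Measure Ω} [IsFiniteMeasure P] {Y : Ω → ℝ}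
  {s : ℝ → ℝ} {u v : ℝ}

theorem integrable_exp_mul_prod (hY : Measurable Y) (hY0 : ∀ ω, 0 ≤ Y ω) (hs : Measurable s)
    (hs0 : ∀ θ, s θ ≤ 0) :
    Integrable (Function.uncurry fun ω θ => exp (s θ * Y ω))
      (P.prod (volume.restrict (Ioc u v))) := by
  refine Integrable.mono' (integrable_const 1) (by fun_prop) (.of_forall fun ⟨ω, θ⟩ => ?_)
  rw [Function.uncurry_apply_pair, Real.norm_eq_abs, abs_exp, exp_le_one_iff]
  exact mul_nonpos_of_nonpos_of_nonneg (hs0 θ) (hY0 ω)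

theorem integral_intervalIntegral_exp_mul (hY : Measurable Y) (hY0 : ∀ ω, 0 ≤ Y ω)
    (hs : Measurable s) (hs0 : ∀ θ, s θ ≤ 0) (huv : u ≤ v) :
    Integrable (fun ω => ∫ θ in u..v, exp (s θ * Y ω)) P ∧
      ∫ ω, (∫ θ in u..v, exp (s θ * Y ω)) ∂P = ∫ θ in u..v, mgf Y P (s θ) := by
  have hint := integrable_exp_mul_prod (P := P) (u := u) (v := v) hY hY0 hs hs0
  simp only [intervalIntegral.integral_of_le huv]
  exact ⟨hint.integral_prod_left, integral_integral_swap hint⟩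

end Fubini

theorem continuous_intervalIntegral_exp_neg_div {g : ℝ → ℝ} (hg : Continuous g)
    (hg0 : ∀ θ, g θ ≠ 0) (u v : ℝ) : Continuous fun a => ∫ θ in u..v, exp (-a / g θ) :=
  continuous_parametric_intervalIntegral_of_continuous' (f := fun a θ => exp (-a / g θ))
    (continuous_exp.comp (continuous_fst.neg.div (hg.comp continuous_snd) fun p => hg0 p.2)) u v

theorem measureReal_lt_mul_eq_one_sub_intervalIntegral_mgf {Ω : Type*} [MeasurableSpace Ω]
    {P : Measure Ω} [IsProbabilityMeasure P] {X Y : Ω → ℝ} (hX : Measurable X)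
    (hY : Measurable Y) (hXY : IndepFun X Y P) (hY0 : ∀ ω, 0 ≤ Y ω) {g : ℝ → ℝ}
    (hg : Continuous g) (hg0 : ∀ θ, 0 < g θ) {t : ℝ} (ht : 0 ≤ t)
    (hcdf : ∀ a, 0 ≤ a →
      P.real {ω | X ω ≤ a} = 1 - (1 / π) * ∫ θ in (0 : ℝ)..π, exp (-a / g θ)) :
    P.real {ω | X ω < t * Y ω} = 1 - (1 / π) * ∫ θ in (0 : ℝ)..π, mgf Y P (-t / g θ) := by
  set F : ℝ → ℝ := fun a => 1 - (1 / π) * ∫ θ in (0 : ℝ)..π, exp (-a / g θ) with hF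
  have hF_cont : Continuous F :=
    continuous_const.sub (continuous_const.mul
      (continuous_intervalIntegral_exp_neg_div hg (fun θ => (hg0 θ).ne') 0 π))
  have hF_zero : F 0 = 0 := by
    simp only [hF, neg_zero, zero_div, exp_zero, intervalIntegral.integral_const, smul_eq_mul,
      mul_one, sub_zero, one_div, inv_mul_cancel₀ pi_ne_zero, sub_self]
  have hX_lt : ∀ a, 0 ≤ a → P.real {ω | X ω < a} = F a := by
    intro a ha
    rcases ha.eq_or_lt with rfl | ha
    · rw [hF_zero]
      refine le_antisymm ?_ measureReal_nonneg
      calc P.real {ω | X ω < 0} ≤ P.real {ω | X ω ≤ 0} :=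
            measureReal_mono fun ω (hω : X ω < 0) => hω.le
        _ = 0 := (hcdf 0 le_rfl).trans hF_zero
    · exact measureReal_setOf_lt_eq_of_continuousWithinAt hF_cont.continuousWithinAt
        (eventually_of_mem (Ioo_mem_nhdsLT ha) fun b hb => hcdf b hb.1.le)
  have hs : Measurable fun θ => -t / g θ := hg.measurable.const_div _
  have hs0 : ∀ θ, -t / g θ ≤ 0 := fun θ =>
    div_nonpos_of_nonpos_of_nonneg (neg_nonpos.2 ht) (hg0 θ).le
  obtain ⟨hint, hswap⟩ := integral_intervalIntegral_exp_mul (P := P) hY hY0 hs hs0 pi_pos.le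
  calc P.real {ω | X ω < t * Y ω}
      = ∫ ω', P.real {ω | X ω < t * Y ω'} ∂P :=
        IndepFun.measureReal_mem_eq_integral (s := {p | p.1 < t * p.2}) hX hY hXY
          (measurableSet_lt measurable_fst (measurable_const.mul measurable_snd))
    _ = ∫ ω', (1 - (1 / π) * ∫ θ in (0 : ℝ)..π, exp (-t / g θ * Y ω')) ∂P := by
        refine integral_congr_ae (.of_forall fun ω' => ?_)
        simp only [hX_lt _ (mul_nonneg ht (hY0 ω')), hF, div_mul_eq_mul_div, neg_mul]
    _ = 1 - (1 / π) * ∫ θ in (0 : ℝ)..π, mgf Y P (-t / g θ) := by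
        rw [integral_sub (integrable_const 1) (hint.const_mul _),
          MeasureTheory.integral_const_mul, hswap, MeasureTheory.integral_const, probReal_univ,
          one_smul]

/-- The paper's `γ(θ, q)`: the squared-Hoyt law is the mixture over `θ ∈ (0, π)` of
exponential laws with these means. -/
noncomputable def hoytSnr (γbar q θ : ℝ) : ℝ := γbar * (1 - (1 - q ^ 2) / (1 + q ^ 2) * cos θ)

theorem continuous_hoytSnr (γbar q : ℝ) : Continuous (hoytSnr γbar q) := by
  unfold hoytSnr
  fun_prop

theorem hoytSnr_pos {γbar q : ℝ} (hγ : 0 < γbar) (hq : q ≠ 0) (θ : ℝ) : 0 < hoytSnr γbar q θ := by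
  have hq2 : 0 < q ^ 2 := by positivity
  have hc : |(1 - q ^ 2) / (1 + q ^ 2)| < 1 := by
    rw [abs_div, abs_of_pos (by positivity : (0 : ℝ) < 1 + q ^ 2), div_lt_one (by positivity),
      abs_lt]
    constructor <;> linarith
  have hcos : (1 - q ^ 2) / (1 + q ^ 2) * cos θ < 1 :=
    calc (1 - q ^ 2) / (1 + q ^ 2) * cos θ ≤ |(1 - q ^ 2) / (1 + q ^ 2)| * |cos θ| :=
          (le_abs_self _).trans (abs_mul _ _).le
      _ ≤ |(1 - q ^ 2) / (1 + q ^ 2)| := mul_le_of_le_one_right (abs_nonneg _) (abs_cos_le_one θ)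
      _ < 1 := hc
  exact mul_pos hγ (sub_pos.2 hcos)

theorem outage_interference_limited_general
    {Ω : Type*} [MeasurableSpace Ω] (P : Measure Ω) [IsProbabilityMeasure P]
    (X Y : Ω → ℝ) (hmX : Measurable X) (hmY : Measurable Y)
    (hindep : IndepFun X Y P)
    (γbar q γo : ℝ) (hγ : 0 < γbar) (hq0 : 0 < q) (ho : 0 < γo)
    (hYpos : ∀ ω, 0 ≤ Y ω)
    (hXcdf : ∀ a : ℝ, 0 ≤ a → (P {ω | X ω ≤ a}).toReal =
      1 - (1 / π) * ∫ θ in (0:ℝ)..π,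
        Real.exp (-a / (γbar * (1 - (1 - q ^ 2) / (1 + q ^ 2) * Real.cos θ)))) :
    (P {ω | X ω < γo * Y ω}).toReal =
      1 - (1 / π) * ∫ θ in (0:ℝ)..π,
        mgf Y P (-γo / (γbar * (1 - (1 - q ^ 2) / (1 + q ^ 2) * Real.cos θ))) :=
  measureReal_lt_mul_eq_one_sub_intervalIntegral_mgf hmX hmY hindep hYpos
    (continuous_hoytSnr γbar q) (hoytSnr_pos hγ hq0.ne') ho.le hXcdf

theorem outage_interference_limited
    {Ω : Type*} [MeasurableSpace Ω] (P : Measure Ω) [IsProbabilityMeasure P]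
    (X Y : Ω → ℝ) (hmX : Measurable X) (hmY : Measurable Y)
    (hindep : IndepFun X Y P)
    (γbar q γo : ℝ) (hγ : 0 < γbar) (hq0 : 0 < q) (hq1 : q ≤ 1) (ho : 0 < γo)
    (hXpos : ∀ ω, 0 ≤ X ω) (hYpos : ∀ ω, 0 ≤ Y ω)
    (hXcdf : ∀ a : ℝ, 0 ≤ a → (P {ω | X ω ≤ a}).toReal =
      1 - (1 / π) * ∫ θ in (0:ℝ)..π,
        Real.exp (-a / (γbar * (1 - (1 - q ^ 2) / (1 + q ^ 2) * Real.cos θ))))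
    (hmgf : ∀ s : ℝ, s ≤ 0 → Integrable (fun ω => Real.exp (s * Y ω)) P) :
    (P {ω | X ω < γo * Y ω}).toReal =
      1 - (1 / π) * ∫ θ in (0:ℝ)..π,
        mgf Y P (-γo / (γbar * (1 - (1 - q ^ 2) / (1 + q ^ 2) * Real.cos θ))) :=
  outage_interference_limited_general P X Y hmX hmY hindep γbar q γo hγ hq0 ho hYpos hXcdf
end
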